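/- For every positive integer k and every d ≥ 2(k+1), and for every n with d ≤ n ≤ floor((k+2)/(k+1) · d) - 1, there exists an n-dimensional polytope that is k-equivalent to the d-crosspolytope. -/

import Mathlib

open Set

noncomputable section

abbrev Ept (n : ℕ) := EuclideanSpace ℝ (Fin n)

variable {V : Type*}

/-- A polytope: the convex hull of a finite set of points. -/
def IsPolytope [AddCommGroup V] [Module ℝ V] (P : Set V) : Prop :=
  ∃ S : Finset V, P = convexHull ℝ (S : Set V)

/-- The (affine) dimension of a set. -/
def pdim [AddCommGroup V] [Module ℝ V] (F : Set V) : ℕ :=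
  Module.finrank ℝ (vectorSpan ℝ F)

open scoped Classical in
/-- Rank of a face in the face lattice: the empty face has rank 0,
a k-dimensional face has rank k+1. -/
def frank [AddCommGroup V] [Module ℝ V] (F : Set V) : ℕ :=
  if F = ∅ then 0 else pdim F + 1

section TopDefs
variable [AddCommGroup V] [Module ℝ V] [TopologicalSpace V]
variable {W : Type*} [AddCommGroup W] [Module ℝ W] [TopologicalSpace W]

/-- The face lattice of `P`: all exposed faces (including `∅` and `P`), ordered by inclusion. -/
abbrev FaceLat (P : Set V) := {F : Set V // IsExposed ℝ P F}

/-- Combinatorial equivalence: isomorphism of face lattices. -/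
def CombEquiv (P : Set V) (Q : Set W) : Prop :=
  Nonempty (FaceLat P ≃o FaceLat Q)

/-- The k-skeleton of `P` as a poset: all faces of dimension at most `k`, ordered by inclusion. -/
abbrev kSkel (P : Set V) (k : ℕ) := {F : Set V // IsExposed ℝ P F ∧ pdim F ≤ k}

/-- k-equivalence: combinatorial equivalence of k-skeletons. -/
def kEquiv (P : Set V) (Q : Set W) (k : ℕ) : Prop :=
  Nonempty (kSkel P k ≃o kSkel Q k)

/-- The graph (1-skeleton) of a polytope: vertices are the exposed points,
two vertices adjacent when the segment between them is a face. -/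
def polyGraph (P : Set V) : SimpleGraph {x : V // IsExposed ℝ P {x}} where
  Adj u v := u ≠ v ∧ IsExposed ℝ P (segment ℝ u.1 v.1)
  symm := by
    constructor
    intro u v h
    exact ⟨h.1.symm, by rw [segment_symm]; exact h.2⟩
  loopless := by
    constructor
    intro u h
    exact h.1 rfl

/-- A simple `d`-polytope: every vertex lies on exactly `d` edges. -/
def IsSimplePolytope (P : Set V) (d : ℕ) : Prop :=
  IsPolytope P ∧ pdim P = d ∧
    ∀ x : V, IsExposed ℝ P {x} →
      {F : Set V | IsExposed ℝ P F ∧ pdim F = 1 ∧ x ∈ F}.ncard = d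

end TopDefs

/-- The `d`-dimensional crosspolytope `conv{±e₁, …, ±e_d}`. -/
def cross (d : ℕ) : Set (Ept d) :=
  convexHull ℝ
    {x | ∃ i : Fin d, x = EuclideanSpace.single i (1 : ℝ) ∨ x = -EuclideanSpace.single i (1 : ℝ)}



namespace CrossAux

variable {E : Type*} [AddCommGroup E] [Module ℝ E]

open scoped Classical in
theorem argmax_conv (S : Finset E) (l : E →ₗ[ℝ] ℝ) :
    {x ∈ convexHull ℝ (S : Set E) | ∀ y ∈ convexHull ℝ (S : Set E), l y ≤ l x}
      = convexHull ℝ ((S.filter (fun v => ∀ w ∈ S, l w ≤ l v)) : Set E) := by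
  set T := S.filter (fun v => ∀ w ∈ S, l w ≤ l v) with hT
  ext x
  constructor
  · rintro ⟨hxS, hxmax⟩
    obtain ⟨w, hw0, hw1, hwx⟩ := Finset.mem_convexHull'.1 hxS
    have hSne : S.Nonempty := by
      rcases Finset.eq_empty_or_nonempty S with h | h
      · subst h; simp [convexHull_empty] at hxS
      · exact h
    obtain ⟨v0, hv0S, hv0max⟩ := S.exists_max_image l hSne
    have hlx_le : l x ≤ l v0 := by
      have : l x = ∑ y ∈ S, w y * l y := by
        rw [← hwx, map_sum]; simp [map_smul, smul_eq_mul]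
      rw [this]
      calc ∑ y ∈ S, w y * l y ≤ ∑ y ∈ S, w y * l v0 := by
            apply Finset.sum_le_sum
            intro i hi
            exact mul_le_mul_of_nonneg_left (hv0max i hi) (hw0 i hi)
        _ = l v0 := by rw [← Finset.sum_mul, hw1, one_mul]
    have hlx_ge : l v0 ≤ l x := hxmax v0 (subset_convexHull ℝ _ hv0S)
    have hlx : l x = l v0 := le_antisymm hlx_le hlx_ge
    have hzero : ∀ y ∈ S, y ∉ T → w y = 0 := by
      by_contra hcon
      push_neg at hcon
      obtain ⟨y0, hy0S, hy0T, hy0w⟩ := hcon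
      have hwy0pos : 0 < w y0 := lt_of_le_of_ne (hw0 y0 hy0S) (Ne.symm hy0w)
      have hly0 : l y0 < l v0 := by
        rcases lt_or_eq_of_le (hv0max y0 hy0S) with h | h
        · exact h
        · exfalso; apply hy0T
          rw [hT, Finset.mem_filter]
          exact ⟨hy0S, fun w' hw' => h ▸ hv0max w' hw'⟩
      have hsum_lt : ∑ y ∈ S, w y * l y < ∑ y ∈ S, w y * l v0 := by
        apply Finset.sum_lt_sum
        · intro i hi; exact mul_le_mul_of_nonneg_left (hv0max i hi) (hw0 i hi)
        · exact ⟨y0, hy0S, by nlinarith⟩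
      have : l x = ∑ y ∈ S, w y * l y := by
        rw [← hwx, map_sum]; simp [map_smul, smul_eq_mul]
      rw [hlx] at this
      rw [← Finset.sum_mul, hw1, one_mul] at hsum_lt
      linarith [this ▸ hsum_lt]
    refine Finset.mem_convexHull'.2 ⟨w, ?_, ?_, ?_⟩
    · intro y hy; exact hw0 y (Finset.filter_subset _ _ hy)
    · exact (Finset.sum_subset (Finset.filter_subset _ _)
        (fun y hy hyT => hzero y hy hyT)).trans hw1
    · exact (Finset.sum_subset (Finset.filter_subset _ _)
        (fun y hy hyT => by rw [hzero y hy hyT, zero_smul])).trans hwx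
  · intro hx
    have hTne : T.Nonempty := by
      rcases Finset.eq_empty_or_nonempty T with h | h
      · rw [h] at hx; simp [convexHull_empty] at hx
      · exact h
    obtain ⟨v0, hv0⟩ := hTne
    have hv0S : v0 ∈ S := Finset.filter_subset _ _ hv0
    have hv0max : ∀ w ∈ S, l w ≤ l v0 := (Finset.mem_filter.1 hv0).2
    have hTsub : (T : Set E) ⊆ {z | l z = l v0} := by
      intro v hv
      rcases Finset.mem_filter.1 hv with ⟨hvS, hvmax⟩
      exact le_antisymm (hv0max v hvS) (hvmax v0 hv0S)
    have hxconvS : x ∈ convexHull ℝ (S : Set E) :=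
      convexHull_mono (Finset.coe_subset.2 (Finset.filter_subset _ _)) hx
    have hxval : l x = l v0 := convexHull_min hTsub (convex_hyperplane l.isLinear (l v0)) hx
    refine ⟨hxconvS, ?_⟩
    intro y hy
    have hSsub : (S : Set E) ⊆ {z | l z ≤ l v0} := fun v hv => hv0max v hv
    rw [hxval]
    exact convexHull_min hSsub (convex_halfSpace_le l.isLinear (l v0)) hy

def sgn (ε : Bool) : ℝ := if ε then 1 else -1

@[simp] lemma sgn_mul_self (ε : Bool) : sgn ε * sgn ε = 1 := by cases ε <;> simp [sgn]

lemma sgn_true : sgn true = 1 := rfl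
lemma sgn_false : sgn false = -1 := rfl

variable {k d n s : ℕ}

section Gen

variable (hdn : d ≤ n) (blk : Fin d → Fin s) (M : Fin s → Ept n)

/-- vertices of the join of crosspolytopes -/
def Vtx (w : Fin d × Bool) : Ept n :=
  sgn w.2 • EuclideanSpace.single (Fin.castLE hdn w.1) (1 : ℝ) + M (blk w.1)

variable (hM : ∀ b (i : Fin d), M b (Fin.castLE hdn i) = 0)

include hM in
lemma Vtx_apply (w : Fin d × Bool) (i : Fin d) :
    Vtx hdn blk M w (Fin.castLE hdn i) = if w.1 = i then sgn w.2 else 0 := by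
  obtain ⟨j, δ⟩ := w
  simp only [Vtx, PiLp.add_apply, PiLp.smul_apply, EuclideanSpace.single_apply, hM,
    add_zero, smul_eq_mul]
  by_cases h : j = i
  · subst h; simp
  · rw [if_neg (by simpa using (Ne.symm h)), if_neg h, mul_zero]

include hM in
lemma Vtx_injective : Function.Injective (Vtx hdn blk M) := by
  rintro ⟨j, δ⟩ ⟨j', δ'⟩ h
  have h1 := congrArg (fun x : Ept n => x (Fin.castLE hdn j)) h
  simp only [Vtx_apply hdn blk M hM, if_pos rfl] at h1
  by_cases hjj : j' = j
  · subst hjj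
    simp only [if_pos rfl] at h1
    have : δ = δ' := by
      cases δ <;> cases δ' <;> first | rfl | (exfalso; norm_num [sgn] at h1)
    rw [this]
  · rw [if_neg hjj] at h1
    exfalso; cases δ <;> simp [sgn] at h1

/-- admissible vertex sets -/
def Adm (k : ℕ) (W : Finset (Fin d × Bool)) : Prop :=
  W.card ≤ k + 1 ∧ ∀ i : Fin d, ¬((i, true) ∈ W ∧ (i, false) ∈ W)

lemma Adm.eq_of_fst_eq {W : Finset (Fin d × Bool)}
    (hW : ∀ i : Fin d, ¬((i, true) ∈ W ∧ (i, false) ∈ W))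
    {w w' : Fin d × Bool} (hw : w ∈ W) (hw' : w' ∈ W) (h : w.1 = w'.1) : w = w' := by
  obtain ⟨i, ε⟩ := w; obtain ⟨i', ε'⟩ := w'
  cases h
  cases ε <;> cases ε'
  · rfl
  · exact absurd ⟨hw', hw⟩ (hW i)
  · exact absurd ⟨hw, hw'⟩ (hW i)
  · rfl

include hM in
lemma affineIndependent_vtx {W : Finset (Fin d × Bool)}
    (hW : ∀ i : Fin d, ¬((i, true) ∈ W ∧ (i, false) ∈ W)) :
    AffineIndependent ℝ (fun w : W => Vtx hdn blk M w) := by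
  rw [affineIndependent_iff]
  intro t wt _ hsum e het
  have h1 := congrArg (EuclideanSpace.proj (Fin.castLE hdn e.1.1)) hsum
  rw [map_sum, map_zero] at h1
  have h2 : ∀ w ∈ t, wt w • (EuclideanSpace.proj (Fin.castLE hdn (e:Fin d × Bool).1))
      (Vtx hdn blk M w) = if w = e then wt e * sgn (e : Fin d × Bool).2 else 0 := by
    intro w hw
    have : (EuclideanSpace.proj (Fin.castLE hdn (e : Fin d × Bool).1))
        (Vtx hdn blk M w) = if (w : Fin d × Bool).1 = (e : Fin d × Bool).1
          then sgn (w : Fin d × Bool).2 else 0 := by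
      simpa using Vtx_apply hdn blk M hM w (e : Fin d × Bool).1
    rw [this]
    by_cases hwe : w = e
    · subst hwe; simp
    · rw [if_neg ?_, smul_zero, if_neg hwe]
      intro hfst
      exact hwe (Subtype.ext (Adm.eq_of_fst_eq hW w.2 e.2 hfst))
  simp only [map_smul, smul_eq_mul] at h1
  simp only [smul_eq_mul] at h2
  rw [Finset.sum_congr rfl h2, Finset.sum_ite_eq' t e
    (fun _ => wt e * sgn (e : Fin d × Bool).2), if_pos het] at h1
  cases he : (e : Fin d × Bool).2 <;> rw [he] at h1 <;>
    simpa [sgn] using h1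

end Gen

lemma pdim_convexHull (A : Set E) : pdim (convexHull ℝ A) = pdim A := by
  unfold pdim
  rw [← direction_affineSpan, ← direction_affineSpan ℝ A, affineSpan_convexHull]

lemma pdim_mono {m : ℕ} {F G : Set (Ept m)} (h : F ⊆ G) : pdim F ≤ pdim G :=
  Submodule.finrank_mono (vectorSpan_mono ℝ h)

section Gen2

variable (hdn : d ≤ n) (blk : Fin d → Fin s) (M : Fin s → Ept n)
variable (hM : ∀ b (i : Fin d), M b (Fin.castLE hdn i) = 0)

include hM in
lemma pdim_conv_vtx {W : Finset (Fin d × Bool)} (hWne : W.Nonempty)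
    (hW : ∀ i : Fin d, ¬((i, true) ∈ W ∧ (i, false) ∈ W)) :
    pdim (convexHull ℝ (Vtx hdn blk M '' W)) = W.card - 1 := by
  rw [pdim_convexHull, Set.image_eq_range]
  unfold pdim
  have hcard : Fintype.card W = (W.card - 1) + 1 := by
    have := Finset.card_pos.mpr hWne
    rw [Fintype.card_coe]; omega
  exact (affineIndependent_vtx hdn blk M hM hW).finrank_vectorSpan hcard

omit hM in
lemma single_mem_vectorSpan {F : Set (Ept n)} (i : Fin d)
    (ht : Vtx hdn blk M (i, true) ∈ F) (hf : Vtx hdn blk M (i, false) ∈ F) :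
    EuclideanSpace.single (Fin.castLE hdn i) (1 : ℝ) ∈ vectorSpan ℝ F := by
  have hdiff : Vtx hdn blk M (i, true) -ᵥ Vtx hdn blk M (i, false)
      = (2 : ℝ) • EuclideanSpace.single (Fin.castLE hdn i) (1 : ℝ) := by
    simp only [Vtx, sgn_true, sgn_false, vsub_eq_sub]
    module
  have hmem := vsub_mem_vectorSpan ℝ ht hf
  rw [hdiff] at hmem
  have := Submodule.smul_mem _ ((2 : ℝ)⁻¹) hmem
  rwa [smul_smul, inv_mul_cancel₀ (by norm_num), one_smul] at this

omit hM in
lemma le_pdim_of_block {F : Set (Ept n)} (B : Finset (Fin d))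
    (hB : ∀ i ∈ B, ∀ ε : Bool, Vtx hdn blk M (i, ε) ∈ F) :
    B.card ≤ pdim F := by
  have hfam : ∀ i : B, EuclideanSpace.single (Fin.castLE hdn (i : Fin d)) (1 : ℝ)
      ∈ vectorSpan ℝ F := fun i =>
    single_mem_vectorSpan hdn blk M i (hB i i.2 true) (hB i i.2 false)
  have hli : LinearIndependent ℝ (fun i : B => (⟨_, hfam i⟩ : vectorSpan ℝ F)) := by
    rw [linearIndependent_iff'']
    intro t g hg0 hsum i
    by_cases hit : i ∈ t
    · have h1 := congrArg (fun x : vectorSpan ℝ F =>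
        (EuclideanSpace.proj (Fin.castLE hdn (i : Fin d))) (x : Ept n)) hsum
      simp only [Submodule.coe_sum, Submodule.coe_smul, map_sum, map_smul,
        Submodule.coe_zero, map_zero, smul_eq_mul] at h1
      have h2 : ∀ j ∈ t, g j * (EuclideanSpace.proj (Fin.castLE hdn (i : Fin d)))
          (EuclideanSpace.single (Fin.castLE hdn (j : Fin d)) (1 : ℝ))
          = if j = i then g i else 0 := by
        intro j hj
        by_cases hij : j = i
        · subst hij
          simp [PiLp.proj_apply, EuclideanSpace.single_apply]
        · rw [if_neg hij]
          simp only [PiLp.proj_apply, EuclideanSpace.single_apply]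
          rw [if_neg (fun hc => hij (Subtype.ext (Fin.castLE_injective hdn hc).symm)),
            mul_zero]
      rw [Finset.sum_congr rfl h2, Finset.sum_ite_eq' t i (fun _ => g i), if_pos hit] at h1
      exact h1
    · exact hg0 i hit
  have := hli.fintype_card_le_finrank
  rwa [Fintype.card_coe] at this

open scoped Classical in
/-- the weight vector associated to an admissible vertex set -/
def wfun (W : Finset (Fin d × Bool)) (i : Fin d) : ℝ :=
  if (i, true) ∈ W then 1 else if (i, false) ∈ W then -1 else 0

omit blk M in
open scoped Classical in
/-- the exposing functional associated to an admissible vertex set -/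
def lfun (W : Finset (Fin d × Bool)) : Ept n →L[ℝ] ℝ :=
  ∑ i : Fin d, wfun W i • EuclideanSpace.proj (Fin.castLE hdn i)

include hM in
open scoped Classical in
lemma lfun_vtx {W : Finset (Fin d × Bool)}
    (hW : ∀ i : Fin d, ¬((i, true) ∈ W ∧ (i, false) ∈ W)) (w : Fin d × Bool) :
    lfun hdn W (Vtx hdn blk M w) =
      if w ∈ W then 1 else if (w.1, !w.2) ∈ W then -1 else 0 := by
  obtain ⟨j, δ⟩ := w
  have h0 : lfun hdn W (Vtx hdn blk M (j, δ))
      = ∑ i : Fin d, wfun W i * (if j = i then sgn δ else 0) := by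
    simp only [lfun, ContinuousLinearMap.sum_apply, ContinuousLinearMap.smul_apply,
      smul_eq_mul]
    congr 1
    ext i
    congr 1
    simpa [PiLp.proj_apply] using Vtx_apply hdn blk M hM (j, δ) i
  rw [h0]
  have h2 : ∀ i ∈ Finset.univ, wfun W i * (if j = i then sgn δ else 0)
      = if i = j then wfun W j * sgn δ else 0 := by
    intro i _
    by_cases hij : i = j
    · subst hij; simp
    · rw [if_neg hij, if_neg (Ne.symm hij), mul_zero]
  rw [Finset.sum_congr rfl h2, Finset.sum_ite_eq' Finset.univ j (fun _ => wfun W j * sgn δ),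
    if_pos (Finset.mem_univ j)]
  by_cases ht : (j, true) ∈ W <;> by_cases hf : (j, false) ∈ W
  · exact absurd ⟨ht, hf⟩ (hW j)
  · cases δ <;> simp [wfun, sgn, ht, hf]
  · cases δ <;> simp [wfun, sgn, ht, hf]
  · cases δ <;> simp [wfun, sgn, ht, hf]

include hM in
lemma lfun_vtx_le_one {W : Finset (Fin d × Bool)}
    (hW : ∀ i : Fin d, ¬((i, true) ∈ W ∧ (i, false) ∈ W)) (w : Fin d × Bool) :
    lfun hdn W (Vtx hdn blk M w) ≤ 1 := by
  rw [lfun_vtx hdn blk M hM hW w]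
  split_ifs <;> norm_num

include hM in
lemma lfun_vtx_eq_one_iff {W : Finset (Fin d × Bool)}
    (hW : ∀ i : Fin d, ¬((i, true) ∈ W ∧ (i, false) ∈ W)) (w : Fin d × Bool) :
    lfun hdn W (Vtx hdn blk M w) = 1 ↔ w ∈ W := by
  rw [lfun_vtx hdn blk M hM hW w]
  split_ifs with h1 h2 <;> simp_all <;> norm_num

include hM in
lemma exposed_conv_vtx {W : Finset (Fin d × Bool)}
    (hW : ∀ i : Fin d, ¬((i, true) ∈ W ∧ (i, false) ∈ W)) :
    IsExposed ℝ (convexHull ℝ (Set.range (Vtx hdn blk M)))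
      (convexHull ℝ (Vtx hdn blk M '' (W : Set (Fin d × Bool)))) := by
  classical
  intro hne
  have hWne : W.Nonempty := by
    rcases Finset.eq_empty_or_nonempty W with h | h
    · exfalso; rw [h] at hne; simp [convexHull_empty] at hne
    · exact h
  refine ⟨lfun hdn W, ?_⟩
  set SV : Finset (Ept n) := Finset.image (Vtx hdn blk M) Finset.univ with hSV
  have hSVcoe : (SV : Set (Ept n)) = Set.range (Vtx hdn blk M) := by
    rw [hSV, Finset.coe_image, Finset.coe_univ, Set.image_univ]
  have key := argmax_conv SV (lfun hdn W).toLinearMap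
  have hfil : ((SV.filter (fun v => ∀ u ∈ SV, (lfun hdn W).toLinearMap u
      ≤ (lfun hdn W).toLinearMap v)) : Set (Ept n))
      = Vtx hdn blk M '' (W : Set (Fin d × Bool)) := by
    ext v
    simp only [Finset.coe_filter, Set.mem_setOf_eq, Set.mem_image, Finset.mem_coe]
    constructor
    · rintro ⟨hvS, hvmax⟩
      rw [hSV] at hvS
      obtain ⟨w0, -, rfl⟩ := Finset.mem_image.1 hvS
      obtain ⟨w1, hw1⟩ := hWne
      have h1 : (1 : ℝ) ≤ lfun hdn W (Vtx hdn blk M w0) := by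
        have := hvmax (Vtx hdn blk M w1)
          (by rw [hSV]; exact Finset.mem_image_of_mem _ (Finset.mem_univ _))
        rw [ContinuousLinearMap.coe_coe] at this
        have hval : lfun hdn W (Vtx hdn blk M w1) = 1 :=
          (lfun_vtx_eq_one_iff hdn blk M hM hW w1).2 hw1
        linarith
      have h2 := lfun_vtx_le_one hdn blk M hM hW w0
      exact ⟨w0, (lfun_vtx_eq_one_iff hdn blk M hM hW w0).1 (le_antisymm h2 h1), rfl⟩
    · rintro ⟨w0, hw0, rfl⟩
      refine ⟨by rw [hSV]; exact Finset.mem_image_of_mem _ (Finset.mem_univ _), ?_⟩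
      intro u huS
      rw [hSV] at huS
      obtain ⟨w', -, rfl⟩ := Finset.mem_image.1 huS
      simp only [ContinuousLinearMap.coe_coe]
      rw [(lfun_vtx_eq_one_iff hdn blk M hM hW w0).2 hw0]
      exact lfun_vtx_le_one hdn blk M hM hW w'
  rw [← hSVcoe]
  have : {x ∈ convexHull ℝ (SV : Set (Ept n)) |
      ∀ y ∈ convexHull ℝ (SV : Set (Ept n)), lfun hdn W y ≤ lfun hdn W x}
      = {x ∈ convexHull ℝ (SV : Set (Ept n)) | ∀ y ∈ convexHull ℝ (SV : Set (Ept n)),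
        (lfun hdn W).toLinearMap y ≤ (lfun hdn W).toLinearMap x} := rfl
  rw [this, key, hfil]

end Gen2

section Gen3

variable (hdn : d ≤ n) (blk : Fin d → Fin s) (M : Fin s → Ept n)
variable (hM : ∀ b (i : Fin d), M b (Fin.castLE hdn i) = 0)
variable (hblk : ∀ b : Fin s, k + 1 ≤ (Finset.univ.filter (fun i => blk i = b)).card)

include hM hblk in
open scoped Classical in
lemma face_structure {F : Set (Ept n)}
    (hF : IsExposed ℝ (convexHull ℝ (Set.range (Vtx hdn blk M))) F)
    (hdim : pdim F ≤ k) :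
    ∃ W : Finset (Fin d × Bool), (∀ i : Fin d, ¬((i, true) ∈ W ∧ (i, false) ∈ W)) ∧
      W.card ≤ k + 1 ∧ F = convexHull ℝ (Vtx hdn blk M '' (W : Set (Fin d × Bool))) := by
  rcases F.eq_empty_or_nonempty with hFe | hFne
  · exact ⟨∅, by simp, by simp, by simp [hFe, convexHull_empty]⟩
  obtain ⟨l, hl⟩ := hF hFne
  set W : Finset (Fin d × Bool) :=
    Finset.univ.filter (fun w => ∀ w' : Fin d × Bool,
      l (Vtx hdn blk M w') ≤ l (Vtx hdn blk M w)) with hWdef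
  have hmemW : ∀ w : Fin d × Bool, w ∈ W ↔ ∀ w' : Fin d × Bool,
      l (Vtx hdn blk M w') ≤ l (Vtx hdn blk M w) := by
    intro w; rw [hWdef, Finset.mem_filter]; simp
  -- F = convexHull of vertices in W
  set SV : Finset (Ept n) := Finset.image (Vtx hdn blk M) Finset.univ with hSV
  have hSVcoe : (SV : Set (Ept n)) = Set.range (Vtx hdn blk M) := by
    rw [hSV, Finset.coe_image, Finset.coe_univ, Set.image_univ]
  have hfil : ((SV.filter (fun v => ∀ u ∈ SV, l.toLinearMap u ≤ l.toLinearMap v)) : Set (Ept n))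
      = Vtx hdn blk M '' (W : Set (Fin d × Bool)) := by
    ext v
    simp only [Finset.coe_filter, Set.mem_setOf_eq, Set.mem_image, Finset.mem_coe]
    constructor
    · rintro ⟨hvS, hvmax⟩
      rw [hSV] at hvS
      obtain ⟨w0, -, rfl⟩ := Finset.mem_image.1 hvS
      refine ⟨w0, (hmemW w0).2 (fun w' => ?_), rfl⟩
      have := hvmax (Vtx hdn blk M w')
        (by rw [hSV]; exact Finset.mem_image_of_mem _ (Finset.mem_univ _))
      simpa using this
    · rintro ⟨w0, hw0, rfl⟩
      refine ⟨by rw [hSV]; exact Finset.mem_image_of_mem _ (Finset.mem_univ _), ?_⟩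
      intro u huS
      rw [hSV] at huS
      obtain ⟨w', -, rfl⟩ := Finset.mem_image.1 huS
      simpa using (hmemW w0).1 hw0 w'
  have hFW : F = convexHull ℝ (Vtx hdn blk M '' (W : Set (Fin d × Bool))) := by
    rw [hl, ← hSVcoe]
    have : {x ∈ convexHull ℝ (SV : Set (Ept n)) |
        ∀ y ∈ convexHull ℝ (SV : Set (Ept n)), l y ≤ l x}
        = {x ∈ convexHull ℝ (SV : Set (Ept n)) | ∀ y ∈ convexHull ℝ (SV : Set (Ept n)),
          l.toLinearMap y ≤ l.toLinearMap x} := rfl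
    rw [this, argmax_conv SV l.toLinearMap, hfil]
  -- no antipodal pair
  have hW : ∀ i : Fin d, ¬((i, true) ∈ W ∧ (i, false) ∈ W) := by
    rintro i ⟨hti, hfi⟩
    set b := blk i with hb
    set α : Fin d → ℝ := fun j => l (EuclideanSpace.single (Fin.castLE hdn j) (1 : ℝ)) with hα
    set τ : Fin s → ℝ := fun b' => l (M b') with hτ
    have hval : ∀ w : Fin d × Bool, l (Vtx hdn blk M w) = sgn w.2 * α w.1 + τ (blk w.1) := by
      intro w
      simp [Vtx, map_add, map_smul, hα, hτ, smul_eq_mul]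
    have hmax := (hmemW _).1 hti
    have heq : l (Vtx hdn blk M (i, false)) = l (Vtx hdn blk M (i, true)) :=
      le_antisymm (hmax _) ((hmemW _).1 hfi _)
    have hαi : α i = 0 := by
      have h1 := hval (i, true); have h2 := hval (i, false)
      rw [sgn_true] at h1; rw [sgn_false] at h2
      simp only at h1 h2
      linarith [heq, h1, h2]
    have hτb : τ b = l (Vtx hdn blk M (i, true)) := by
      have h1 := hval (i, true)
      rw [sgn_true] at h1
      simp only at h1
      rw [h1, hαi]; ring
    have hall : ∀ j : Fin d, blk j = b → ∀ ε : Bool, (j, ε) ∈ W := by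
      intro j hj ε
      have hαj : α j = 0 := by
        have h1 := hmax (j, true); have h2 := hmax (j, false)
        rw [hval (j, true), sgn_true] at h1
        rw [hval (j, false), sgn_false] at h2
        simp only [hj] at h1 h2
        rw [hτb] at h1 h2
        linarith
      rw [hmemW]
      intro w'
      rw [hval (j, ε)]
      simp only [hj, hαj, mul_zero, zero_add, hτb]
      exact hmax w'
    have hsub : (Finset.univ.filter (fun j => blk j = b)).card ≤ pdim F := by
      apply le_pdim_of_block hdn blk M
      intro j hj ε
      rw [hFW]
      exact subset_convexHull ℝ _
        ⟨(j, ε), Finset.mem_coe.2 (hall j (Finset.mem_filter.1 hj).2 ε), rfl⟩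
    have := hblk b
    omega
  -- cardinality
  have hWne : W.Nonempty := by
    rcases Finset.eq_empty_or_nonempty W with h | h
    · exfalso
      rw [h] at hFW
      simp [convexHull_empty] at hFW
      exact hFne.ne_empty hFW
    · exact h
  have hcard : W.card ≤ k + 1 := by
    have h1 := pdim_conv_vtx hdn blk M hM hWne hW
    rw [← hFW] at h1
    have := Finset.card_pos.mpr hWne
    omega
  exact ⟨W, hW, hcard, hFW⟩

include hM in
lemma subset_of_conv_subset {W W' : Finset (Fin d × Bool)}
    (h : convexHull ℝ (Vtx hdn blk M '' (W : Set (Fin d × Bool)))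
      ⊆ convexHull ℝ (Vtx hdn blk M '' (W' : Set (Fin d × Bool)))) : W ⊆ W' := by
  intro u hu
  by_contra hu'
  set g : Ept n →ₗ[ℝ] ℝ :=
    sgn u.2 • (EuclideanSpace.proj (Fin.castLE hdn u.1) : Ept n →L[ℝ] ℝ).toLinearMap with hg
  have hgval : ∀ w : Fin d × Bool, g (Vtx hdn blk M w)
      = sgn u.2 * (if w.1 = u.1 then sgn w.2 else 0) := by
    intro w
    rw [hg]
    simp only [LinearMap.smul_apply, ContinuousLinearMap.coe_coe, smul_eq_mul]
    congr 1
    simpa [PiLp.proj_apply] using Vtx_apply hdn blk M hM w u.1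
  have hle : Vtx hdn blk M '' (W' : Set (Fin d × Bool)) ⊆ {z | g z ≤ 0} := by
    rintro _ ⟨w', hw', rfl⟩
    rw [Set.mem_setOf_eq, hgval w']
    by_cases hfst : w'.1 = u.1
    · rw [if_pos hfst]
      have hsnd : w'.2 ≠ u.2 := by
        intro hsnd
        apply hu'
        have huw : u = w' := Prod.ext hfst.symm hsnd.symm
        rw [huw]
        exact Finset.mem_coe.1 hw'
      cases hv : w'.2 <;> cases hv' : u.2 <;> simp_all [sgn]
    · rw [if_neg hfst, mul_zero]
  have hmem : Vtx hdn blk M u ∈ {z : Ept n | g z ≤ 0} :=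
    convexHull_min hle (convex_halfSpace_le g.isLinear 0)
      (h (subset_convexHull ℝ _ ⟨u, Finset.mem_coe.2 hu, rfl⟩))
  rw [Set.mem_setOf_eq, hgval u, if_pos rfl, sgn_mul_self] at hmem
  norm_num at hmem

end Gen3

/-- the combinatorial model for the k-skeleton -/
abbrev Mdl (k d : ℕ) := {W : Finset (Fin d × Bool) // Adm k W}

section Gen4

variable (hdn : d ≤ n) (blk : Fin d → Fin s) (M : Fin s → Ept n)
variable (hM : ∀ b (i : Fin d), M b (Fin.castLE hdn i) = 0)
variable (hblk : ∀ b : Fin s, k + 1 ≤ (Finset.univ.filter (fun i => blk i = b)).card)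

include hM hblk in
theorem skel_iso {P : Set (Ept n)} (hP : P = convexHull ℝ (Set.range (Vtx hdn blk M))) :
    Nonempty (kSkel P k ≃o Mdl k d) := by
  subst hP
  have hexp : ∀ W : Mdl k d, IsExposed ℝ (convexHull ℝ (Set.range (Vtx hdn blk M)))
      (convexHull ℝ (Vtx hdn blk M '' (W.1 : Set (Fin d × Bool)))) :=
    fun W => exposed_conv_vtx hdn blk M hM W.2.2
  have hpd : ∀ W : Mdl k d,
      pdim (convexHull ℝ (Vtx hdn blk M '' (W.1 : Set (Fin d × Bool)))) ≤ k := by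
    intro W
    rcases Finset.eq_empty_or_nonempty W.1 with h | h
    · rw [h]
      simp only [Finset.coe_empty, Set.image_empty, convexHull_empty]
      unfold pdim
      rw [vectorSpan_empty, finrank_bot]
      omega
    · rw [pdim_conv_vtx hdn blk M hM h W.2.2]
      have := W.2.1
      omega
  set Φ : Mdl k d → kSkel (convexHull ℝ (Set.range (Vtx hdn blk M))) k :=
    fun W => ⟨convexHull ℝ (Vtx hdn blk M '' (W.1 : Set (Fin d × Bool))),
      hexp W, hpd W⟩ with hΦ
  have hinj : Function.Injective Φ := by
    intro W W' h
    have hsets := congrArg Subtype.val h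
    simp only [hΦ] at hsets
    apply Subtype.ext
    exact Finset.Subset.antisymm
      (subset_of_conv_subset hdn blk M hM (le_of_eq hsets))
      (subset_of_conv_subset hdn blk M hM (le_of_eq hsets.symm))
  have hsurj : Function.Surjective Φ := by
    rintro ⟨F, hFexp, hFdim⟩
    obtain ⟨W, hW1, hW2, hW3⟩ := face_structure hdn blk M hM hblk hFexp hFdim
    exact ⟨⟨W, hW2, hW1⟩, Subtype.ext hW3.symm⟩
  refine ⟨(OrderIso.symm
    { toEquiv := Equiv.ofBijective Φ ⟨hinj, hsurj⟩, map_rel_iff' := ?_ })⟩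
  intro W W'
  change Φ W ≤ Φ W' ↔ W ≤ W'
  constructor
  · intro h
    exact subset_of_conv_subset hdn blk M hM h
  · intro h
    exact convexHull_mono (Set.image_mono (Finset.coe_subset.2 h))

end Gen4

end CrossAux

/-- for every `k ≥ 1`, `d ≥ 2(k+1)` and `d ≤ n ≤ ⌊((k+2)/(k+1))·d⌋ - 1`
there is an `n`-dimensional polytope that is `k`-equivalent to the `d`-crosspolytope. -/
theorem exists_k_equiv_to_cross (k d n : ℕ) (hk : 1 ≤ k) (hd : 2 * (k + 1) ≤ d)
    (hn₁ : d ≤ n) (hn₂ : n ≤ (k + 2) * d / (k + 1) - 1) :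
    ∃ P : Set (Ept n), IsPolytope P ∧ pdim P = n ∧ kEquiv P (cross d) k := by
  classical
  open CrossAux in
  -- arithmetic
  have hk1 : 0 < k + 1 := Nat.succ_pos _
  have hdiv : d + 2 ≤ (k + 2) * d / (k + 1) := by
    rw [Nat.le_div_iff_mul_le hk1]; nlinarith
  have hn1' : n + 1 ≤ (k + 2) * d / (k + 1) := by
    set Q := (k + 2) * d / (k + 1) with hQ
    omega
  have hmul : (n + 1) * (k + 1) ≤ (k + 2) * d := (Nat.le_div_iff_mul_le hk1).1 hn1'
  have hkey : (n - d + 1) * (k + 1) ≤ d := by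
    have e1 : (n + 1) * (k + 1) = d * (k + 1) + (n - d + 1) * (k + 1) := by
      rw [← add_mul]; congr 1; omega
    have e2 : (k + 2) * d = d * (k + 1) + d := by ring
    rw [e1, e2] at hmul
    exact Nat.le_of_add_le_add_left hmul
  have hd0 : 0 < d := by omega
  set s : ℕ := n - d + 1 with hs
  have hbound : ∀ b t : ℕ, b ≤ n - d → t ≤ k → b * (k + 1) + t < d := by
    intro b t hb ht
    calc b * (k + 1) + t < b * (k + 1) + (k + 1) := by omega
      _ = (b + 1) * (k + 1) := by ring
      _ ≤ (n - d + 1) * (k + 1) := Nat.mul_le_mul_right _ (by omega)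
      _ ≤ d := hkey
  set blk : Fin d → Fin s := fun i => ⟨min ((i : ℕ) / (k + 1)) (n - d), by omega⟩
    with hblkdef
  set M : Fin s → Ept n := fun b => if hb : (b : ℕ) = 0 then 0
    else EuclideanSpace.single (⟨d + (b : ℕ) - 1, by have := b.isLt; omega⟩ : Fin n) 1
    with hMdef
  have hM : ∀ b (i : Fin d), M b (Fin.castLE hn₁ i) = 0 := by
    intro b i
    simp only [hMdef]
    by_cases hb : (b : ℕ) = 0
    · simp [hb]
    · rw [dif_neg hb, EuclideanSpace.single_apply, if_neg ?_]
      intro hc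
      have hcv := congrArg Fin.val hc
      simp only [Fin.coe_castLE] at hcv
      have := i.isLt
      omega
  have hblk_at : ∀ (b : Fin s) (t : ℕ) (ht : t ≤ k),
      blk ⟨(b : ℕ) * (k + 1) + t,
        hbound (b : ℕ) t (by have := b.isLt; omega) ht⟩ = b := by
    intro b t ht
    rw [hblkdef]
    apply Fin.ext
    simp only
    have hdivv : ((b : ℕ) * (k + 1) + t) / (k + 1) = (b : ℕ) := by
      rw [Nat.mul_comm, Nat.mul_add_div hk1, Nat.div_eq_of_lt (by omega), add_zero]
    rw [hdivv]
    exact min_eq_left (by have := b.isLt; omega)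
  have hblk : ∀ b : Fin s, k + 1 ≤ (Finset.univ.filter (fun i => blk i = b)).card := by
    intro b
    have hcard := Finset.card_le_card_of_injOn
      (f := fun t : ℕ => (⟨(b : ℕ) * (k + 1) + min t k,
        hbound (b : ℕ) (min t k) (by have := b.isLt; omega) (min_le_right _ _)⟩ : Fin d))
      (s := Finset.range (k + 1))
      (t := Finset.univ.filter (fun i => blk i = b))
      (by
        intro t hts
        rw [Finset.mem_coe, Finset.mem_filter]
        exact ⟨Finset.mem_univ _, hblk_at b (min t k) (min_le_right _ _)⟩)
      (by
        intro t1 h1 t2 h2 hf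
        have := congrArg Fin.val hf
        simp only at this
        rw [Finset.mem_coe, Finset.mem_range] at h1 h2
        omega)
    rwa [Finset.card_range] at hcard
  set P : Set (Ept n) := convexHull ℝ (Set.range (Vtx hn₁ blk M)) with hP
  -- full dimension
  have hsingle_low : ∀ i : Fin d, EuclideanSpace.single (Fin.castLE hn₁ i) (1 : ℝ)
      ∈ vectorSpan ℝ (Set.range (Vtx hn₁ blk M)) := fun i =>
    single_mem_vectorSpan hn₁ blk M i (Set.mem_range_self _) (Set.mem_range_self _)
  have hM0 : M ⟨0, by omega⟩ = 0 := by simp [hMdef]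
  have hsingle : ∀ j : Fin n, EuclideanSpace.single j (1 : ℝ)
      ∈ vectorSpan ℝ (Set.range (Vtx hn₁ blk M)) := by
    intro j
    by_cases hj : (j : ℕ) < d
    · have h1 := hsingle_low ⟨(j : ℕ), hj⟩
      have hcast : Fin.castLE hn₁ (⟨(j : ℕ), hj⟩ : Fin d) = j := Fin.ext rfl
      rwa [hcast] at h1
    · have hjn := j.isLt
      set b : Fin s := ⟨(j : ℕ) - d + 1, by omega⟩ with hbdef
      have hMb : M b = EuclideanSpace.single j 1 := by
        simp only [hMdef]
        rw [dif_neg (by simp [hbdef])]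
        congr! 1
        apply Fin.ext
        show d + ((j : ℕ) - d + 1) - 1 = (j : ℕ)
        omega
      set i_b : Fin d := ⟨(b : ℕ) * (k + 1) + 0,
        hbound (b : ℕ) 0 (by have := b.isLt; omega) (by omega)⟩ with hibdef
      have hblk_ib : blk i_b = b := hblk_at b 0 (by omega)
      set i_0 : Fin d := ⟨0, hd0⟩ with hi0def
      have hblk_i0 : blk i_0 = ⟨0, by omega⟩ := by
        rw [hblkdef]
        apply Fin.ext
        simp [hi0def, Nat.div_eq_of_lt hk1]
      have hdiffmem := vsub_mem_vectorSpan ℝ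
        (Set.mem_range_self (f := Vtx hn₁ blk M) (i_b, true))
        (Set.mem_range_self (f := Vtx hn₁ blk M) (i_0, true))
      have hMbmem : M b ∈ vectorSpan ℝ (Set.range (Vtx hn₁ blk M)) := by
        have hexp : M b = (Vtx hn₁ blk M (i_b, true) -ᵥ Vtx hn₁ blk M (i_0, true))
            - EuclideanSpace.single (Fin.castLE hn₁ i_b) 1
            + EuclideanSpace.single (Fin.castLE hn₁ i_0) 1 := by
          simp only [Vtx, sgn_true, vsub_eq_sub, hblk_ib, hblk_i0, hM0]
          module
        rw [hexp]
        exact Submodule.add_mem _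
          (Submodule.sub_mem _ hdiffmem (hsingle_low i_b)) (hsingle_low i_0)
      rwa [hMb] at hMbmem
  have hspan : vectorSpan ℝ (Set.range (Vtx hn₁ blk M)) = ⊤ := by
    apply le_antisymm le_top
    rw [← (PiLp.basisFun 2 ℝ (Fin n)).span_eq]
    apply Submodule.span_le.2
    rintro _ ⟨j, rfl⟩
    have hbj : (PiLp.basisFun 2 ℝ (Fin n)) j = EuclideanSpace.single j 1 := by
      rw [PiLp.basisFun_apply]
    rw [hbj]
    exact hsingle j
  have hpdim : pdim P = n := by
    rw [hP, pdim_convexHull]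
    unfold pdim
    rw [hspan, finrank_top, finrank_euclideanSpace_fin]
  -- polytope
  have hpoly : IsPolytope P := by
    refine ⟨Finset.image (Vtx hn₁ blk M) Finset.univ, ?_⟩
    rw [hP, Finset.coe_image, Finset.coe_univ, Set.image_univ]
  -- skeleton isomorphisms
  obtain ⟨e1⟩ := skel_iso (k := k) hn₁ blk M hM hblk hP
  have hM1 : ∀ (b : Fin 1) (i : Fin d),
      (fun _ : Fin 1 => (0 : Ept d)) b (Fin.castLE (le_refl d) i) = 0 := fun _ _ => rfl
  have hblk1 : ∀ b : Fin 1, k + 1 ≤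
      (Finset.univ.filter (fun _ : Fin d => (0 : Fin 1) = b)).card := by
    intro b
    have hft : (Finset.univ.filter (fun _ : Fin d => (0 : Fin 1) = b)) = Finset.univ := by
      apply Finset.filter_true_of_mem
      intro i _
      exact Subsingleton.elim _ _
    rw [hft, Finset.card_univ, Fintype.card_fin]
    omega
  have hcross : cross d = convexHull ℝ
      (Set.range (Vtx (le_refl d) (fun _ : Fin d => (0 : Fin 1)) (fun _ => (0 : Ept d)))) := by
    unfold cross
    congr 1
    ext x
    constructor
    · rintro ⟨i, (rfl | rfl)⟩
      · exact ⟨(i, true), by simp [Vtx, sgn]⟩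
      · exact ⟨(i, false), by simp [Vtx, sgn]⟩
    · rintro ⟨⟨i, ε⟩, rfl⟩
      refine ⟨i, ?_⟩
      cases ε
      · right; simp [Vtx, sgn]
      · left; simp [Vtx, sgn]
  obtain ⟨e2⟩ := skel_iso (k := k) (le_refl d) (fun _ : Fin d => (0 : Fin 1))
    (fun _ => (0 : Ept d)) hM1 hblk1 hcross
  exact ⟨P, hpoly, hpdim, ⟨e1.trans e2.symm⟩⟩

end
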